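/- arXiv:2010.12811 — 2 statements merged into one kernel-verified Lean document; each statement's English description precedes it below -/
import Mathlib

section
/- For any two random variables X₁, X₂ with joint distribution P(X₁,X₂) and any measurable function g : X₁ × X₂ → ℝ, the mutual information satisfies I(X₁;X₂) ≥ E_{P(X₁,X₂)}[g(X₁,X₂)] − E_{P(X₁)⊗P(X₂)}[exp(g(X₁,X₂) − 1)]. -/
open BigOperators Finset

/-- Marginal of the first coordinate of a joint pmf on `α × β`. -/
noncomputable def margFst {α β : Type*} [Fintype α] [Fintype β] (p : α × β → ℝ) (a : α) : ℝ :=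
  ∑ b, p (a, b)

/-- Marginal of the second coordinate of a joint pmf on `α × β`. -/
noncomputable def margSnd {α β : Type*} [Fintype α] [Fintype β] (p : α × β → ℝ) (b : β) : ℝ :=
  ∑ a, p (a, b)

/-- Mutual information of a joint pmf on `α × β` (KL divergence between the joint and the
product of its marginals). -/
noncomputable def mutualInfo {α β : Type*} [Fintype α] [Fintype β] (p : α × β → ℝ) : ℝ :=
  ∑ x : α × β, p x * Real.log (p x / (margFst p x.1 * margSnd p x.2))

/-! The bound holds termwise: `t ↦ exp (t - 1)` is the convex conjugate of `x ↦ x log x`, so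
Fenchel–Young gives `a t - b exp (t - 1) ≤ a log (a / b)` for every pair of weights `a, b`
with `b = 0 → a = 0`. Summing this over `α × β` with `a = p x`, `b = P(X₁ = x₁) P(X₂ = x₂)`
and `t = g x` is the NWJ bound. -/

lemma mul_sub_mul_exp_sub_one_le_mul_log_div {a b : ℝ} (t : ℝ) (ha : 0 ≤ a) (hb : 0 ≤ b)
    (hab : b = 0 → a = 0) :
    a * t - b * Real.exp (t - 1) ≤ a * Real.log (a / b) := by
  rcases ha.eq_or_lt with rfl | ha
  · simpa using mul_nonneg hb (Real.exp_nonneg _)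
  have hb : 0 < b := hb.lt_of_ne fun h => ha.ne' (hab h.symm)
  -- `log x ≤ x - 1` at `x = b exp (t - 1) / a`
  have hlog := Real.log_le_sub_one_of_pos (x := b * Real.exp (t - 1) / a) (by positivity)
  rw [Real.log_div (by positivity) ha.ne', Real.log_mul hb.ne' (Real.exp_pos _).ne',
    Real.log_exp] at hlog
  rw [Real.log_div ha.ne' hb.ne']
  have hdiv : a * (b * Real.exp (t - 1) / a) = b * Real.exp (t - 1) := by field_simp
  nlinarith [mul_le_mul_of_nonneg_left hlog ha.le]

section Marginals

variable {α β : Type*} [Fintype α] [Fintype β] {p : α × β → ℝ}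

lemma le_margFst (hp : ∀ x, 0 ≤ p x) (x : α × β) : p x ≤ margFst p x.1 :=
  single_le_sum (f := fun b => p (x.1, b)) (fun _ _ => hp _) (mem_univ x.2)

lemma le_margSnd (hp : ∀ x, 0 ≤ p x) (x : α × β) : p x ≤ margSnd p x.2 :=
  single_le_sum (f := fun a => p (a, x.2)) (fun _ _ => hp _) (mem_univ x.1)

lemma eq_zero_of_margFst_mul_margSnd_eq_zero (hp : ∀ x, 0 ≤ p x) {x : α × β}
    (hx : margFst p x.1 * margSnd p x.2 = 0) : p x = 0 := by
  rcases mul_eq_zero.mp hx with h | h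
  · exact le_antisymm (h ▸ le_margFst hp x) (hp x)
  · exact le_antisymm (h ▸ le_margSnd hp x) (hp x)

end Marginals

theorem nwj_variational_lower_bound_general {α β : Type*} [Fintype α] [Fintype β]
    (p : α × β → ℝ) (g : α × β → ℝ)
    (hp : ∀ x, 0 ≤ p x) :
    mutualInfo p ≥
      (∑ x : α × β, p x * g x) -
        ∑ a, ∑ b, margFst p a * margSnd p b * Real.exp (g (a, b) - 1) := by
  have hmarg : ∀ x : α × β, 0 ≤ margFst p x.1 * margSnd p x.2 := fun x =>
    mul_nonneg ((hp x).trans (le_margFst hp x)) ((hp x).trans (le_margSnd hp x))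
  rw [ge_iff_le, ← Fintype.sum_prod_type' (f := fun a b => _ * Real.exp (g (a, b) - 1)),
    mutualInfo, ← sum_sub_distrib]
  exact sum_le_sum fun x _ => mul_sub_mul_exp_sub_one_le_mul_log_div (g x) (hp x) (hmarg x)
    (eq_zero_of_margFst_mul_margSnd_eq_zero hp)

/-- **Nguyen–Wainwright–Jordan variational lower bound.** For any joint pmf `p` of two
random variables `X₁, X₂` on finite spaces and any function `g`,
`I(X₁;X₂) ≥ E_P[g] − E_{P(X₁)⊗P(X₂)}[exp(g − 1)]`. -/
theorem nwj_variational_lower_bound {α β : Type*} [Fintype α] [Fintype β]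
    (p : α × β → ℝ) (g : α × β → ℝ)
    (hp : ∀ x, 0 ≤ p x) (hsum : ∑ x, p x = 1) :
    mutualInfo p ≥
      (∑ x : α × β, p x * g x) -
        ∑ a, ∑ b, margFst p a * margSnd p b * Real.exp (g (a, b) - 1) :=
  nwj_variational_lower_bound_general p g hp
end

section
/- Let D be a random variable and let Z_X^{(0)}, Z_A^{(1)}, Z_X^{(1)}, ..., Z_A^{(L)}, Z_X^{(L)} follow the Markovian dependence where each Z_A^{(l)} depends only on (A, Z_X^{(l−1)}) and each Z_X^{(l)} depends only on (Z_X^{(l−1)}, Z_A^{(l)}), with D = (A, X) and Z_X^{(0)} = X. If index sets S_X, S_A ⊆ {1,...,L} satisfy D ⊥ Z_X^{(L)} | ({Z_X^{(l)}}_{l∈S_X} ∪ {Z_A^{(l)}}_{l∈S_A}), then I(D; Z_X^{(L)}) ≤ Σ_{l∈S_A} AIB^{(l)} + Σ_{l∈S_X} XIB^{(l)}, where AIB^{(l)} = E[log(P(Z_A^{(l)}|A, Z_X^{(l−1)})/Q(Z_A^{(l)}))] and XIB^{(l)} = E[log(P(Z_X^{(l)}|Z_X^{(l−1)}, Z_A^{(l)})/Q(Z_X^{(l)}))],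 for arbitrary variational distributions Q(Z_A^{(l)}), Q(Z_X^{(l)}). -/
/-!
Write `S` for the selected variables `({Z_X^{(l)}}_{l ∈ S_X}, {Z_A^{(l)}}_{l ∈ S_A})` and `Y` for
`Z_X^{(L)}`. Every step is Gibbs' inequality `∑ p log (q / p) ≤ ∑ q - ∑ p`, applied to a suitable
comparison weight `q`:

* data processing: since `D ⊥ Y | S`, comparing the joint law of `(D, S, Y)` with the coupling
  `P(d, y) P(s | y)` gives `I(D; Y) ≤ I(D; S)`;
* replacing the marginal `P(S)` by the product `Q(S)` of the variational distributions can only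
  increase `I(D; S) = E log (P(S | D) / P(S))`;
* given `D`, the chain factors as (selected kernels) × (remaining kernels), and the remaining
  kernels, summed over a fibre of `S`, have total mass one; comparing with
  `P(D, S) × (remaining kernels)` bounds `E log (P(S | D) / Q(S))` by
  `E log ((selected kernels) / Q(S))`, which is `∑ AIB + ∑ XIB`.
-/

open BigOperators Finset

/-- `Z_X^{(l-1)}`: the node features entering layer `l` (the raw features `x` for `l = 0`,
and the output of the previous layer otherwise). -/
def prevIdx {L : ℕ} {X : Type*} (x : X) (zx : Fin L → X) (l : Fin L) : X :=
  if l.1 = 0 then x else zx ⟨l.1 - 1, Nat.lt_of_le_of_lt (Nat.sub_le l.1 1) l.2⟩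

/-- The selected variables `({Z_X^{(l)}}_{l ∈ S_X}, {Z_A^{(l)}}_{l ∈ S_A})`. -/
def selOf {L : ℕ} {X T : Type*} (SX SA : Finset (Fin L))
    (za : Fin L → T) (zx : Fin L → X) :
    ({l : Fin L // l ∈ SX} → X) × ({l : Fin L // l ∈ SA} → T) :=
  (fun l => zx l.1, fun l => za l.1)

/-- The joint pmf of `(D, selected variables, Z_X^{(L)})`. -/
noncomputable def pJoint {L : ℕ} {A X T : Type*}
    [Fintype A] [Fintype X] [Fintype T] [DecidableEq X] [DecidableEq T]
    (p : (A × X) × (Fin L → T) × (Fin L → X) → ℝ) (SX SA : Finset (Fin L)) (last : Fin L)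
    (t : (A × X) × (({l : Fin L // l ∈ SX} → X) × ({l : Fin L // l ∈ SA} → T)) × X) : ℝ :=
  ∑ za : Fin L → T, ∑ zx : Fin L → X,
    if selOf SX SA za zx = t.2.1 ∧ zx last = t.2.2 then p (t.1, za, zx) else 0

open Real

theorem sum_mul_log_le_sum_mul_log {ι : Type*} [Fintype ι] {p q a b : ι → ℝ}
    (hp : ∀ i, 0 ≤ p i) (hq : ∀ i, 0 ≤ q i)
    (hab : ∀ i, 0 < p i → 0 < b i ∧ 0 < q i ∧ a i = b i * (q i / p i))
    (hmass : ∑ i, q i ≤ ∑ i, p i) :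
    ∑ i, p i * log (a i) ≤ ∑ i, p i * log (b i) := by
  have key : ∀ i, p i * log (a i) ≤ p i * log (b i) + (q i - p i) := by
    intro i
    rcases (hp i).eq_or_lt with hpi | hpi
    · simp [← hpi, hq i]
    obtain ⟨hb, hqi, ha⟩ := hab i hpi
    have gibbs : p i * log (q i / p i) ≤ q i - p i := by
      calc p i * log (q i / p i) ≤ p i * (q i / p i - 1) :=
            mul_le_mul_of_nonneg_left (log_le_sub_one_of_pos (div_pos hqi hpi)) hpi.le
        _ = q i - p i := by field_simp
    rw [ha, log_mul hb.ne' (div_pos hqi hpi).ne', mul_add]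
    linarith
  calc ∑ i, p i * log (a i) ≤ ∑ i, (p i * log (b i) + (q i - p i)) := sum_le_sum fun i _ => key i
    _ = ∑ i, p i * log (b i) + (∑ i, q i - ∑ i, p i) := by
      rw [sum_add_distrib, sum_sub_distrib]
    _ ≤ ∑ i, p i * log (b i) := by linarith

theorem sum_log_div {ι : Type*} (S : Finset ι) {a b : ι → ℝ} (ha : ∀ i ∈ S, 0 < a i)
    (hb : ∀ i ∈ S, 0 < b i) :
    ∑ i ∈ S, log (a i / b i) = log ((∏ i ∈ S, a i) / ∏ i ∈ S, b i) := by
  rw [log_div (prod_pos ha).ne' (prod_pos hb).ne', log_prod (fun i hi => (ha i hi).ne'),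
    log_prod (fun i hi => (hb i hi).ne'), ← sum_sub_distrib]
  exact sum_congr rfl fun i hi => log_div (ha i hi).ne' (hb i hi).ne'

section Pushforward

variable {Ω κ ν : Type*} [Fintype Ω] [DecidableEq κ]

noncomputable def pushforward (μ : Ω → ℝ) (f : Ω → κ) (k : κ) : ℝ :=
  ∑ ω, if f ω = k then μ ω else 0

theorem sum_pushforward_mul [Fintype κ] (μ : Ω → ℝ) (f : Ω → κ) (F : κ → ℝ) :
    ∑ k, pushforward μ f k * F k = ∑ ω, μ ω * F (f ω) := by
  simp only [pushforward, sum_mul, ite_mul, zero_mul]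
  rw [sum_comm]
  simp

theorem sum_pushforward [Fintype κ] (μ : Ω → ℝ) (f : Ω → κ) :
    ∑ k, pushforward μ f k = ∑ ω, μ ω := by
  simpa using sum_pushforward_mul μ f 1

theorem pushforward_nonneg {μ : Ω → ℝ} (hμ : ∀ ω, 0 ≤ μ ω) (f : Ω → κ) (k : κ) :
    0 ≤ pushforward μ f k :=
  sum_nonneg fun ω _ => by split_ifs <;> simp [hμ ω]

theorem le_pushforward {μ : Ω → ℝ} (hμ : ∀ ω, 0 ≤ μ ω) (f : Ω → κ) (ω : Ω) :
    μ ω ≤ pushforward μ f (f ω) := by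
  unfold pushforward
  simpa using single_le_sum (f := fun ω' => if f ω' = f ω then μ ω' else 0)
    (fun ω' _ => by split_ifs <;> simp [hμ ω']) (mem_univ ω)

variable [DecidableEq ν]

theorem sum_pushforward_prod_right [Fintype ν] (μ : Ω → ℝ) (f : Ω → κ) (g : Ω → ν) (k : κ) :
    ∑ n, pushforward μ (fun ω => (f ω, g ω)) (k, n) = pushforward μ f k := by
  simp only [pushforward, Prod.mk.injEq, ite_and]
  rw [sum_comm]
  simp

theorem sum_pushforward_prod_left [Fintype κ] (μ : Ω → ℝ) (f : Ω → κ) (g : Ω → ν) (n : ν) :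
    ∑ k, pushforward μ (fun ω => (f ω, g ω)) (k, n) = pushforward μ g n := by
  simp only [pushforward, Prod.mk.injEq, ite_and]
  rw [sum_comm]
  simp

end Pushforward

section CondIndep

variable {α β γ : Type*} [Fintype α] [Fintype β] [Fintype γ]

theorem sum_marg_mid_mul (J : α × γ × β → ℝ) (F : α × β → ℝ) :
    ∑ q : α × β, (∑ s, J (q.1, s, q.2)) * F q = ∑ x, J x * F (x.1, x.2.2) := by
  simp only [Fintype.sum_prod_type, sum_mul]
  exact sum_congr rfl fun d _ => sum_comm

theorem sum_marg_last_mul (J : α × γ × β → ℝ) (F : α × γ → ℝ) :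
    ∑ q : α × γ, (∑ y, J (q.1, q.2, y)) * F q = ∑ x, J x * F (x.1, x.2.1) := by
  simp only [Fintype.sum_prod_type, sum_mul]

theorem sum_triple_eq_sum_last (F : α × γ × β → ℝ) :
    ∑ x, F x = ∑ y, ∑ d, ∑ s, F (d, s, y) := by
  simp only [Fintype.sum_prod_type]
  exact (sum_congr rfl fun d _ => sum_comm).trans sum_comm

theorem sum_coupling_eq_sum (J : α × γ × β → ℝ) :
    ∑ x : α × γ × β, (∑ s, J (x.1, s, x.2.2)) * (∑ d, J (d, x.2.1, x.2.2)) /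
      ∑ d, ∑ s, J (d, s, x.2.2) = ∑ x, J x := by
  rw [sum_triple_eq_sum_last, sum_triple_eq_sum_last J]
  refine sum_congr rfl fun y _ => ?_
  have hY : ∑ s, ∑ d, J (d, s, y) = ∑ d, ∑ s, J (d, s, y) := sum_comm
  simp only [mul_div_assoc, ← mul_sum, ← sum_mul, ← sum_div, hY]
  rw [← mul_div_assoc]
  exact mul_self_div_self _

theorem mutualInfo_le_of_condIndep (J : α × γ × β → ℝ) (hJ : ∀ x, 0 ≤ J x)
    (hCI : ∀ d s y, J (d, s, y) * (∑ d', ∑ y', J (d', s, y')) =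
      (∑ y', J (d, s, y')) * (∑ d', J (d', s, y))) :
    mutualInfo (fun q : α × β => ∑ s, J (q.1, s, q.2)) ≤
      mutualInfo (fun q : α × γ => ∑ y, J (q.1, q.2, y)) := by
  set PDY := fun q : α × β => ∑ s, J (q.1, s, q.2)
  set PDS := fun q : α × γ => ∑ y, J (q.1, q.2, y)
  set PSY := fun q : γ × β => ∑ d, J (d, q.1, q.2)
  have hPDY : ∀ x, J x ≤ PDY (x.1, x.2.2) := fun x =>
    single_le_sum (f := fun s => J (x.1, s, x.2.2)) (fun s _ => hJ _) (mem_univ x.2.1)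
  have hPDS : ∀ x, J x ≤ PDS (x.1, x.2.1) := fun x =>
    single_le_sum (f := fun y => J (x.1, x.2.1, y)) (fun y _ => hJ _) (mem_univ x.2.2)
  have hPSY : ∀ x, J x ≤ PSY x.2 := fun x =>
    single_le_sum (f := fun d => J (d, x.2.1, x.2.2)) (fun d _ => hJ _) (mem_univ x.1)
  have hmarg : ∀ d, margFst PDY d = margFst PDS d := fun d => by
    simp only [margFst, PDY, PDS]
    exact sum_comm
  calc mutualInfo PDY
      = ∑ x, J x * log (PDY (x.1, x.2.2) / (margFst PDY x.1 * margSnd PDY x.2.2)) :=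
        sum_marg_mid_mul J _
    _ ≤ ∑ x, J x * log (PDS (x.1, x.2.1) / (margFst PDS x.1 * margSnd PDS x.2.1)) := by
      -- Conditional independence says `J = P(d, s) P(s, y) / P(s)` on the support, so the ratio
      -- of the two logarithms' arguments is `q / J` for the coupling `q = P(d, y) P(s, y) / P(y)`.
      refine sum_mul_log_le_sum_mul_log hJ
        (q := fun x => PDY (x.1, x.2.2) * PSY x.2 / margSnd PDY x.2.2) ?_ ?_ ?_
      · exact fun x => div_nonneg (mul_nonneg ((hJ x).trans (hPDY x)) ((hJ x).trans (hPSY x)))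
          (sum_nonneg fun d _ => sum_nonneg fun s _ => hJ _)
      · rintro ⟨d, s, y⟩ hpos
        have hDS := hpos.trans_le (hPDS (d, s, y))
        have hDY := hpos.trans_le (hPDY (d, s, y))
        have hSY := hpos.trans_le (hPSY (d, s, y))
        have hD : 0 < margFst PDS d :=
          sum_pos' (fun _ _ => sum_nonneg fun _ _ => hJ _) ⟨s, mem_univ s, hDS⟩
        have hS : 0 < margSnd PDS s :=
          sum_pos' (fun _ _ => sum_nonneg fun _ _ => hJ _) ⟨d, mem_univ d, hDS⟩
        have hY : 0 < margSnd PDY y :=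
          sum_pos' (fun _ _ => sum_nonneg fun _ _ => hJ _) ⟨d, mem_univ d, hDY⟩
        refine ⟨div_pos hDS (mul_pos hD hS), div_pos (mul_pos hDY hSY) hY, ?_⟩
        have hS' : margSnd PDS s = ∑ d', ∑ y', J (d', s, y') := rfl
        rw [hmarg]
        field_simp
        linear_combination hCI d s y + J (d, s, y) * hS'
      · exact (sum_coupling_eq_sum J).le
    _ = mutualInfo PDS :=
      (sum_marg_last_mul J fun q => log (PDS q / (margFst PDS q.1 * margSnd PDS q.2))).symm

end CondIndep

theorem mutualInfo_le_sum_mul_log_div {α β : Type*} [Fintype α] [Fintype β] (J : α × β → ℝ)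
    (Q : β → ℝ) (hJ : ∀ x, 0 ≤ J x) (hQ : ∀ b, 0 < Q b) (hmass : ∑ b, Q b ≤ ∑ x, J x) :
    mutualInfo J ≤ ∑ x, J x * log (J x / (margFst J x.1 * Q x.2)) := by
  refine sum_mul_log_le_sum_mul_log hJ (q := fun x => J x * Q x.2 / margSnd J x.2)
    (fun x => div_nonneg (mul_nonneg (hJ x) (hQ _).le) (sum_nonneg fun a _ => hJ _)) ?_ ?_
  · rintro ⟨a, b⟩ hpos
    have hA : 0 < margFst J a := sum_pos' (fun _ _ => hJ _) ⟨b, mem_univ b, hpos⟩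
    have hB : 0 < margSnd J b := sum_pos' (fun _ _ => hJ _) ⟨a, mem_univ a, hpos⟩
    refine ⟨div_pos hpos (mul_pos hA (hQ b)), div_pos (mul_pos hpos (hQ b)) hB, ?_⟩
    have := (hQ b).ne'
    field_simp
  · calc ∑ x, J x * Q x.2 / margSnd J x.2 = ∑ b, margSnd J b * (Q b / margSnd J b) := by
          rw [Fintype.sum_prod_type, sum_comm]
          simp only [mul_div_assoc, ← sum_mul]
          rfl
      _ ≤ ∑ b, Q b := sum_le_sum fun b _ => by
          rcases eq_or_ne (margSnd J b) 0 with hB | hB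
          · simp [hB, (hQ b).le]
          · rw [mul_div_cancel₀ _ hB]
      _ ≤ ∑ x, J x := hmass

theorem sum_pushforward_mul_log_le {α Ω γ : Type*} [Fintype α] [Fintype Ω] [Fintype γ]
    [DecidableEq γ] (p : α × Ω → ℝ) (r : α → ℝ) (f g : α × Ω → ℝ) (sel : Ω → γ) (Q : γ → ℝ)
    (hr : ∀ d, 0 ≤ r d) (hf : ∀ x, 0 ≤ f x) (hg : ∀ x, 0 ≤ g x) (hQ : ∀ s, 0 < Q s)
    (hp : ∀ x, p x = r x.1 * (f x * g x))
    (hg1 : ∀ d s, pushforward (fun ω => g (d, ω)) sel s = 1) :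
    ∑ x : α × γ, pushforward (fun ω => p (x.1, ω)) sel x.2 *
        log (pushforward (fun ω => p (x.1, ω)) sel x.2 / (r x.1 * Q x.2)) ≤
      ∑ x, p x * log (f x / Q (sel x.2)) := by
  set P := fun d => pushforward (fun ω => p (d, ω)) sel
  have hp0 : ∀ x, 0 ≤ p x := fun x => hp x ▸ mul_nonneg (hr _) (mul_nonneg (hf x) (hg x))
  have hP : ∀ x : α × Ω, p x ≤ P x.1 (sel x.2) := fun x =>
    le_pushforward (μ := fun ω => p (x.1, ω)) (fun _ => hp0 _) sel x.2
  calc ∑ x : α × γ, P x.1 x.2 * log (P x.1 x.2 / (r x.1 * Q x.2))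
      = ∑ x : α × Ω, p x * log (P x.1 (sel x.2) / (r x.1 * Q (sel x.2))) := by
        simp only [Fintype.sum_prod_type]
        exact sum_congr rfl fun d _ => sum_pushforward_mul _ sel _
    _ ≤ ∑ x, p x * log (f x / Q (sel x.2)) := by
      refine sum_mul_log_le_sum_mul_log hp0 (q := fun x => P x.1 (sel x.2) * g x)
        (fun x => mul_nonneg ((hp0 x).trans (hP x)) (hg x)) ?_ (le_of_eq ?_)
      · intro x hpos
        have hne : r x.1 * (f x * g x) ≠ 0 := hp x ▸ hpos.ne'
        simp only [mul_ne_zero_iff] at hne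
        obtain ⟨-, hf0, hg0⟩ := hne
        have hPpos := hpos.trans_le (hP x)
        refine ⟨div_pos ((hf x).lt_of_ne' hf0) (hQ _),
          mul_pos hPpos ((hg x).lt_of_ne' hg0), ?_⟩
        have := (hQ (sel x.2)).ne'
        rw [hp x]
        field_simp
      · calc ∑ x : α × Ω, P x.1 (sel x.2) * g x
            = ∑ d, ∑ s, pushforward (fun ω => g (d, ω)) sel s * P d s := by
              rw [Fintype.sum_prod_type]
              refine sum_congr rfl fun d _ => ?_
              rw [sum_pushforward_mul]
              simp only [mul_comm]
          _ = ∑ x, p x := by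
              simp only [hg1, one_mul, P, sum_pushforward, Fintype.sum_prod_type]

section MarkovChain

variable {X T : Type*}

theorem prevIdx_succ {n : ℕ} (x : X) (zx : Fin (n + 1) → X) (l : Fin n) :
    prevIdx x zx l.succ = zx l.castSucc := by
  simp only [prevIdx, Fin.val_succ, Nat.succ_ne_zero, if_false, Nat.add_sub_cancel]
  rfl

theorem prevIdx_zero {n : ℕ} (x : X) (zx : Fin (n + 1) → X) : prevIdx x zx 0 = x := rfl

theorem cons_castSucc_eq_prevIdx {n : ℕ} (x : X) (zx : Fin n → X) (l : Fin n) :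
    (Fin.cons x zx : Fin (n + 1) → X) l.castSucc = prevIdx x zx l := by
  unfold prevIdx
  split_ifs with h
  · have h0 : l.castSucc = 0 := Fin.ext h
    rw [h0, Fin.cons_zero]
  · have h0 : l.castSucc = Fin.succ ⟨l.1 - 1, by omega⟩ := by ext; simp; omega
    rw [h0, Fin.cons_succ]

theorem sum_fun_fin_succ {β : Type*} [Fintype β] {n : ℕ} (F : (Fin (n + 1) → β) → ℝ) :
    ∑ z, F z = ∑ b, ∑ z : Fin n → β, F (Fin.cons b z) := by
  rw [← (Fin.consEquiv fun _ => β).sum_comp, Fintype.sum_prod_type]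
  rfl

theorem sum_sum_prod_prevIdx_eq_one [Fintype X] [Fintype T] {n : ℕ}
    (g : Fin n → X → T → X → ℝ) (hg : ∀ l xp, ∑ t, ∑ x', g l xp t x' = 1) (x : X) :
    ∑ za : Fin n → T, ∑ zx : Fin n → X, ∏ l, g l (prevIdx x zx l) (za l) (zx l) = 1 := by
  induction n generalizing x with
  | zero => simp
  | succ n ih =>
    calc ∑ za : Fin (n + 1) → T, ∑ zx : Fin (n + 1) → X, ∏ l, g l (prevIdx x zx l) (za l) (zx l)
        = ∑ t, ∑ x', g 0 x t x' * ∑ za : Fin n → T, ∑ zx : Fin n → X,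
            ∏ l : Fin n, g l.succ (prevIdx x' zx l) (za l) (zx l) := by
          simp only [sum_fun_fin_succ (β := T), sum_fun_fin_succ (β := X), Fin.prod_univ_succ,
            prevIdx_zero, prevIdx_succ, cons_castSucc_eq_prevIdx, Fin.cons_zero, Fin.cons_succ,
            mul_sum]
          exact sum_congr rfl fun t _ => sum_comm
      _ = 1 := by simp only [ih _ (fun l => hg l.succ), mul_one, hg]

end MarkovChain

section Pin

variable {ι β : Type*} [DecidableEq ι] [DecidableEq β]

def pin (S : Finset ι) (v : {l // l ∈ S} → β) (l : ι) (k : β → ℝ) (b : β) : ℝ :=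
  if h : l ∈ S then (if b = v ⟨l, h⟩ then 1 else 0) else k b

theorem sum_pin [Fintype β] (S : Finset ι) (v : {l // l ∈ S} → β) (l : ι) {k : β → ℝ}
    (hk : ∑ b, k b = 1) : ∑ b, pin S v l k b = 1 := by
  unfold pin
  split_ifs <;> simp [hk]

theorem prod_pin [Fintype ι] (S : Finset ι) (v : {l // l ∈ S} → β) (k : ι → β → ℝ)
    (z : ι → β) :
    ∏ l, pin S v l (k l) (z l) =
      if (fun l : {l // l ∈ S} => z l) = v then ∏ l ∈ Sᶜ, k l (z l) else 0 := by
  split_ifs with h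
  · rw [← prod_mul_prod_compl S, prod_eq_one fun l hl => ?_, one_mul]
    · exact prod_congr rfl fun l hl => dif_neg (mem_compl.mp hl)
    · simp [pin, hl, ← congrFun h ⟨l, hl⟩]
  · obtain ⟨l, hl⟩ := Function.ne_iff.mp h
    exact prod_eq_zero (mem_univ l.1) (by simp [pin, l.2, hl])

end Pin

section GIB

variable {A X T : Type*} {L : ℕ}

-- The factors `P(Z_A^{(l)} | A, Z_X^{(l-1)})` and `P(Z_X^{(l)} | Z_X^{(l-1)}, Z_A^{(l)})` of the
-- chain, evaluated at `x = (D, Z_A, Z_X)`.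
def factorA (PA : Fin L → A × X → T → ℝ) (x : (A × X) × (Fin L → T) × (Fin L → X))
    (l : Fin L) : ℝ :=
  PA l (x.1.1, prevIdx x.1.2 x.2.2 l) (x.2.1 l)

def factorX (PX : Fin L → X × T → X → ℝ) (x : (A × X) × (Fin L → T) × (Fin L → X))
    (l : Fin L) : ℝ :=
  PX l (prevIdx x.1.2 x.2.2 l, x.2.1 l) (x.2.2 l)

def layerProd (PA : Fin L → A × X → T → ℝ) (PX : Fin L → X × T → X → ℝ)
    (SA SX : Finset (Fin L)) (x : (A × X) × (Fin L → T) × (Fin L → X)) : ℝ :=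
  (∏ l ∈ SA, factorA PA x l) * ∏ l ∈ SX, factorX PX x l

variable {PA : Fin L → A × X → T → ℝ} {PX : Fin L → X × T → X → ℝ}

theorem layerProd_nonneg (hPA : ∀ l c t, 0 ≤ PA l c t) (hPX : ∀ l c x, 0 ≤ PX l c x)
    (SA SX : Finset (Fin L)) (x : (A × X) × (Fin L → T) × (Fin L → X)) :
    0 ≤ layerProd PA PX SA SX x :=
  mul_nonneg (prod_nonneg fun _ _ => hPA _ _ _) (prod_nonneg fun _ _ => hPX _ _ _)

theorem prod_factor_eq_layerProd_mul (SA SX : Finset (Fin L))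
    (x : (A × X) × (Fin L → T) × (Fin L → X)) :
    ∏ l, factorA PA x l * factorX PX x l =
      layerProd PA PX SA SX x * layerProd PA PX SAᶜ SXᶜ x := by
  rw [prod_mul_distrib, ← prod_mul_prod_compl SA, ← prod_mul_prod_compl SX, layerProd, layerProd]
  ring

theorem sum_prod_factor_eq_one [Fintype X] [Fintype T] (hPAsum : ∀ l c, ∑ t, PA l c t = 1)
    (hPXsum : ∀ l c, ∑ x, PX l c x = 1) (d : A × X) :
    ∑ ω : (Fin L → T) × (Fin L → X), ∏ l, factorA PA (d, ω) l * factorX PX (d, ω) l = 1 := by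
  rw [Fintype.sum_prod_type]
  refine sum_sum_prod_prevIdx_eq_one (fun l xp t x' => PA l (d.1, xp) t * PX l (xp, t) x')
    (fun l xp => ?_) d.2
  simp only [← mul_sum, hPXsum, mul_one, hPAsum]

theorem pushforward_layerProd_compl_eq_one [Fintype X] [Fintype T] [DecidableEq X] [DecidableEq T]
    (hPAsum : ∀ l c, ∑ t, PA l c t = 1) (hPXsum : ∀ l c, ∑ x, PX l c x = 1)
    (SX SA : Finset (Fin L)) (d : A × X)
    (s : ({l : Fin L // l ∈ SX} → X) × ({l : Fin L // l ∈ SA} → T)) :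
    pushforward (fun ω => layerProd PA PX SAᶜ SXᶜ (d, ω)) (fun ω => selOf SX SA ω.1 ω.2) s
      = 1 := by
  -- The chain whose selected kernels are pinned to `s` has path weight
  -- `if selOf SX SA za zx = s then layerProd PA PX SAᶜ SXᶜ (d, za, zx) else 0`.
  have hchain := sum_sum_prod_prevIdx_eq_one
    (fun l xp t x' => pin SA s.2 l (PA l (d.1, xp)) t * pin SX s.1 l (PX l (xp, t)) x')
    (fun l xp => by
      simp only [← mul_sum, sum_pin _ _ _ (hPXsum _ _), mul_one, sum_pin _ _ _ (hPAsum _ _)]) d.2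
  rw [← hchain, pushforward, Fintype.sum_prod_type]
  refine sum_congr rfl fun za _ => sum_congr rfl fun zx _ => ?_
  rw [prod_mul_distrib, prod_pin SA s.2 (fun l => PA l (d.1, prevIdx d.2 zx l)),
    prod_pin SX s.1 (fun l => PX l (prevIdx d.2 zx l, za l))]
  simp only [selOf, Prod.ext_iff, layerProd, factorA, factorX]
  split_ifs <;> simp_all

def selQ (QA : Fin L → T → ℝ) (QX : Fin L → X → ℝ) (SX SA : Finset (Fin L))
    (s : ({l : Fin L // l ∈ SX} → X) × ({l : Fin L // l ∈ SA} → T)) : ℝ :=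
  (∏ l, QX l.1 (s.1 l)) * ∏ l, QA l.1 (s.2 l)

variable {QA : Fin L → T → ℝ} {QX : Fin L → X → ℝ}

theorem selQ_pos (hQA : ∀ l t, 0 < QA l t) (hQX : ∀ l x, 0 < QX l x) (SX SA : Finset (Fin L))
    (s : ({l : Fin L // l ∈ SX} → X) × ({l : Fin L // l ∈ SA} → T)) :
    0 < selQ QA QX SX SA s :=
  mul_pos (prod_pos fun _ _ => hQX _ _) (prod_pos fun _ _ => hQA _ _)

theorem sum_selQ [Fintype X] [Fintype T] (hQAsum : ∀ l, ∑ t, QA l t = 1)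
    (hQXsum : ∀ l, ∑ x, QX l x = 1) (SX SA : Finset (Fin L)) :
    ∑ s, selQ QA QX SX SA s = 1 := by
  simp only [selQ, Fintype.sum_prod_type, ← mul_sum, ← Fintype.prod_sum, hQXsum,
    hQAsum, prod_const_one, mul_one]

theorem selQ_selOf (SX SA : Finset (Fin L)) (za : Fin L → T) (zx : Fin L → X) :
    selQ QA QX SX SA (selOf SX SA za zx) = (∏ l ∈ SX, QX l (zx l)) * ∏ l ∈ SA, QA l (za l) := by
  rw [selQ, selOf, prod_coe_sort SX (fun l => QX l (zx l)), prod_coe_sort SA (fun l => QA l (za l))]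

theorem factor_pos_of_ne_zero (hPA : ∀ l c t, 0 ≤ PA l c t) (hPX : ∀ l c x, 0 ≤ PX l c x)
    {c : ℝ} {x : (A × X) × (Fin L → T) × (Fin L → X)}
    (h : c * ∏ l, factorA PA x l * factorX PX x l ≠ 0) (l : Fin L) :
    0 < factorA PA x l ∧ 0 < factorX PX x l := by
  have hl := prod_ne_zero_iff.mp (right_ne_zero_of_mul h) l (mem_univ l)
  exact ⟨(hPA _ _ _).lt_of_ne' (left_ne_zero_of_mul hl),
    (hPX _ _ _).lt_of_ne' (right_ne_zero_of_mul hl)⟩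

theorem aib_add_xib_eq_sum_mul_log_layerProd [Fintype A] [Fintype X] [Fintype T]
    (hPA : ∀ l c t, 0 ≤ PA l c t) (hPX : ∀ l c x, 0 ≤ PX l c x)
    (hQA : ∀ l t, 0 < QA l t) (hQX : ∀ l x, 0 < QX l x)
    {pD : A × X → ℝ} {p : (A × X) × (Fin L → T) × (Fin L → X) → ℝ}
    (hp : ∀ x, p x = pD x.1 * ∏ l, factorA PA x l * factorX PX x l) (SX SA : Finset (Fin L)) :
    (∑ l ∈ SA, ∑ d : A × X, ∑ za : Fin L → T, ∑ zx : Fin L → X,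
        p (d, za, zx) * log (PA l (d.1, prevIdx d.2 zx l) (za l) / QA l (za l))) +
      ∑ l ∈ SX, ∑ d : A × X, ∑ za : Fin L → T, ∑ zx : Fin L → X,
        p (d, za, zx) * log (PX l (prevIdx d.2 zx l, za l) (zx l) / QX l (zx l)) =
      ∑ x, p x * log (layerProd PA PX SA SX x / selQ QA QX SX SA (selOf SX SA x.2.1 x.2.2)) := by
  have hswap : ∀ (S : Finset (Fin L)) (F : Fin L → (A × X) → (Fin L → T) → (Fin L → X) → ℝ),
      ∑ l ∈ S, ∑ d, ∑ za, ∑ zx, F l d za zx = ∑ d, ∑ za, ∑ zx, ∑ l ∈ S, F l d za zx := by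
    intro S F
    rw [sum_comm]
    refine sum_congr rfl fun d _ => ?_
    rw [sum_comm]
    exact sum_congr rfl fun za _ => sum_comm
  rw [hswap, hswap, ← sum_add_distrib]
  conv_rhs => rw [Fintype.sum_prod_type]
  refine sum_congr rfl fun d _ => ?_
  rw [← sum_add_distrib]
  conv_rhs => rw [Fintype.sum_prod_type]
  refine sum_congr rfl fun za _ => ?_
  rw [← sum_add_distrib]
  refine sum_congr rfl fun zx _ => ?_
  rcases eq_or_ne (p (d, za, zx)) 0 with h0 | h0
  · simp [h0]
  have hfac := factor_pos_of_ne_zero hPA hPX (hp (d, za, zx) ▸ h0)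
  simp only [factorA, factorX] at hfac
  have hA : 0 < ∏ l ∈ SA, PA l (d.1, prevIdx d.2 zx l) (za l) := prod_pos fun l _ => (hfac l).1
  have hX : 0 < ∏ l ∈ SX, PX l (prevIdx d.2 zx l, za l) (zx l) := prod_pos fun l _ => (hfac l).2
  have hqA : 0 < ∏ l ∈ SA, QA l (za l) := prod_pos fun l _ => hQA l _
  have hqX : 0 < ∏ l ∈ SX, QX l (zx l) := prod_pos fun l _ => hQX l _
  rw [← mul_sum, ← mul_sum, ← mul_add, sum_log_div SA (fun l _ => (hfac l).1) (fun l _ => hQA l _),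
    sum_log_div SX (fun l _ => (hfac l).2) (fun l _ => hQX l _),
    ← log_mul (div_pos hA hqA).ne' (div_pos hX hqX).ne', selQ_selOf, layerProd]
  congr 2
  simp only [factorA, factorX]
  ring

end GIB

section PJoint

variable {A X T : Type*} [Fintype A] [Fintype X] [Fintype T] [DecidableEq X] [DecidableEq T]
  {L : ℕ} (p : (A × X) × (Fin L → T) × (Fin L → X) → ℝ) (SX SA : Finset (Fin L)) (last : Fin L)

theorem pJoint_eq_pushforward (d : A × X)
    (s : ({l : Fin L // l ∈ SX} → X) × ({l : Fin L // l ∈ SA} → T)) (y : X) :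
    pJoint p SX SA last (d, s, y) =
      pushforward (fun ω => p (d, ω)) (fun ω => (selOf SX SA ω.1 ω.2, ω.2 last)) (s, y) := by
  rw [pJoint, pushforward, Fintype.sum_prod_type]
  simp only [Prod.mk.injEq]

theorem sum_pJoint_selected (d : A × X) (y : X) :
    ∑ s, pJoint p SX SA last (d, s, y) =
      ∑ za : Fin L → T, ∑ zx : Fin L → X, if zx last = y then p (d, za, zx) else 0 := by
  simp only [pJoint_eq_pushforward]
  rw [sum_pushforward_prod_left, pushforward, Fintype.sum_prod_type]

theorem sum_pJoint_last (d : A × X)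
    (s : ({l : Fin L // l ∈ SX} → X) × ({l : Fin L // l ∈ SA} → T)) :
    ∑ y, pJoint p SX SA last (d, s, y) =
      pushforward (fun ω => p (d, ω)) (fun ω => selOf SX SA ω.1 ω.2) s := by
  simp only [pJoint_eq_pushforward, sum_pushforward_prod_right]

end PJoint

theorem gib_upper_bound_general {A X T : Type*}
    [Fintype A] [Fintype X] [Fintype T] [DecidableEq X] [DecidableEq T]
    (L : ℕ)
    (pD : A × X → ℝ) (hpD : ∀ d, 0 ≤ pD d) (hpDsum : ∑ d, pD d = 1)
    (PA : Fin L → A × X → T → ℝ)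
    (hPA : ∀ l c t, 0 ≤ PA l c t) (hPAsum : ∀ l c, ∑ t, PA l c t = 1)
    (PX : Fin L → X × T → X → ℝ)
    (hPX : ∀ l c x, 0 ≤ PX l c x) (hPXsum : ∀ l c, ∑ x, PX l c x = 1)
    (QA : Fin L → T → ℝ) (hQA : ∀ l t, 0 < QA l t) (hQAsum : ∀ l, ∑ t, QA l t = 1)
    (QX : Fin L → X → ℝ) (hQX : ∀ l x, 0 < QX l x) (hQXsum : ∀ l, ∑ x, QX l x = 1)
    (p : (A × X) × (Fin L → T) × (Fin L → X) → ℝ)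
    (hfact : ∀ (d : A × X) (za : Fin L → T) (zx : Fin L → X),
      p (d, za, zx) = pD d * ∏ l : Fin L,
        PA l (d.1, prevIdx d.2 zx l) (za l) * PX l (prevIdx d.2 zx l, za l) (zx l))
    (SX SA : Finset (Fin L))
    (last : Fin L)
    (hCI : ∀ (d : A × X) (s : ({l : Fin L // l ∈ SX} → X) × ({l : Fin L // l ∈ SA} → T))
        (xL : X),
      pJoint p SX SA last (d, s, xL) *
          (∑ d', ∑ xL', pJoint p SX SA last (d', s, xL')) =
        (∑ xL', pJoint p SX SA last (d, s, xL')) *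
          (∑ d', pJoint p SX SA last (d', s, xL))) :
    mutualInfo (fun q : (A × X) × X =>
        ∑ za : Fin L → T, ∑ zx : Fin L → X,
          if zx last = q.2 then p (q.1, za, zx) else 0) ≤
      (∑ l ∈ SA, ∑ d : A × X, ∑ za : Fin L → T, ∑ zx : Fin L → X,
        p (d, za, zx) *
          Real.log (PA l (d.1, prevIdx d.2 zx l) (za l) / QA l (za l))) +
      ∑ l ∈ SX, ∑ d : A × X, ∑ za : Fin L → T, ∑ zx : Fin L → X,
        p (d, za, zx) *
          Real.log (PX l (prevIdx d.2 zx l, za l) (zx l) / QX l (zx l)) := by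
  have hp : ∀ x, p x = pD x.1 * ∏ l, factorA PA x l * factorX PX x l := fun x => hfact _ _ _
  have hp0 : ∀ x, 0 ≤ p x := fun x => hp x ▸ mul_nonneg (hpD _)
    (prod_nonneg fun _ _ => mul_nonneg (hPA _ _ _) (hPX _ _ _))
  have hmarg : ∀ d, ∑ ω, p (d, ω) = pD d := fun d => by
    simp only [hp, ← mul_sum, sum_prod_factor_eq_one hPAsum hPXsum, mul_one]
  let sel := fun ω : (Fin L → T) × (Fin L → X) => selOf SX SA ω.1 ω.2
  let PDS := fun q : (A × X) × _ => pushforward (fun ω => p (q.1, ω)) sel q.2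
  have hPDS : ∀ d, margFst PDS d = pD d := fun d => by
    show ∑ s, pushforward (fun ω => p (d, ω)) sel s = pD d
    rw [sum_pushforward, hmarg]
  calc _ = mutualInfo (fun q : (A × X) × X => ∑ s, pJoint p SX SA last (q.1, s, q.2)) := by
        simp only [sum_pJoint_selected]
    _ ≤ mutualInfo (fun q => ∑ y, pJoint p SX SA last (q.1, q.2, y)) :=
        mutualInfo_le_of_condIndep _ (fun _ => sum_nonneg fun _ _ => sum_nonneg fun _ _ =>
          by split_ifs <;> simp [hp0]) hCI
    _ = mutualInfo PDS := by simp only [sum_pJoint_last]; rfl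
    _ ≤ ∑ q, PDS q * log (PDS q / (margFst PDS q.1 * selQ QA QX SX SA q.2)) :=
        mutualInfo_le_sum_mul_log_div _ _ (fun _ => pushforward_nonneg (fun _ => hp0 _) _ _)
          (selQ_pos hQA hQX SX SA) (by
            rw [sum_selQ hQAsum hQXsum, Fintype.sum_prod_type]
            exact ((sum_congr rfl fun d _ => hPDS d).trans hpDsum).ge)
    _ ≤ ∑ x, p x * log (layerProd PA PX SA SX x / selQ QA QX SX SA (sel x.2)) := by
        simp only [hPDS]
        exact sum_pushforward_mul_log_le p pD _ _ sel _ hpD (layerProd_nonneg hPA hPX SA SX)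
          (layerProd_nonneg hPA hPX _ _) (selQ_pos hQA hQX SX SA)
          (fun x => (hp x).trans (by rw [prod_factor_eq_layerProd_mul SA SX]))
          (pushforward_layerProd_compl_eq_one hPAsum hPXsum SX SA)
    _ = _ := (aib_add_xib_eq_sum_mul_log_layerProd hPA hPX hQA hQX hp SX SA).symm

/-- **Proposition 3.2 of the GIB paper.** Let `D = (A, X)` with pmf `pD`, and let the
variables `Z_A^{(l)}, Z_X^{(l)}`, `l ∈ {1,…,L}`, follow the hierarchical Markov chain
`Z_A^{(l)} ∼ P(·|A, Z_X^{(l-1)})`, `Z_X^{(l)} ∼ P(·|Z_X^{(l-1)}, Z_A^{(l)})` with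
`Z_X^{(0)} = X` (hypothesis `hfact`). If the index sets `S_X, S_A` satisfy
`D ⊥ Z_X^{(L)} | ({Z_X^{(l)}}_{l∈S_X} ∪ {Z_A^{(l)}}_{l∈S_A})` (hypothesis `hCI`), then
`I(D; Z_X^{(L)}) ≤ ∑_{l∈S_A} AIB^{(l)} + ∑_{l∈S_X} XIB^{(l)}` for arbitrary variational
distributions `Q_A^{(l)}, Q_X^{(l)}`, where
`AIB^{(l)} = E[log(P(Z_A^{(l)}|A, Z_X^{(l−1)})/Q(Z_A^{(l)}))]` and
`XIB^{(l)} = E[log(P(Z_X^{(l)}|Z_X^{(l−1)}, Z_A^{(l)})/Q(Z_X^{(l)}))]`. -/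
theorem gib_upper_bound {A X T : Type*}
    [Fintype A] [Fintype X] [Fintype T] [DecidableEq X] [DecidableEq T]
    (L : ℕ) (hL : 0 < L)
    (pD : A × X → ℝ) (hpD : ∀ d, 0 ≤ pD d) (hpDsum : ∑ d, pD d = 1)
    (PA : Fin L → A × X → T → ℝ)
    (hPA : ∀ l c t, 0 ≤ PA l c t) (hPAsum : ∀ l c, ∑ t, PA l c t = 1)
    (PX : Fin L → X × T → X → ℝ)
    (hPX : ∀ l c x, 0 ≤ PX l c x) (hPXsum : ∀ l c, ∑ x, PX l c x = 1)
    (QA : Fin L → T → ℝ) (hQA : ∀ l t, 0 < QA l t) (hQAsum : ∀ l, ∑ t, QA l t = 1)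
    (QX : Fin L → X → ℝ) (hQX : ∀ l x, 0 < QX l x) (hQXsum : ∀ l, ∑ x, QX l x = 1)
    (p : (A × X) × (Fin L → T) × (Fin L → X) → ℝ)
    (hfact : ∀ (d : A × X) (za : Fin L → T) (zx : Fin L → X),
      p (d, za, zx) = pD d * ∏ l : Fin L,
        PA l (d.1, prevIdx d.2 zx l) (za l) * PX l (prevIdx d.2 zx l, za l) (zx l))
    (SX SA : Finset (Fin L))
    (last : Fin L) (hlast : last = ⟨L - 1, Nat.sub_lt hL one_pos⟩)
    (hCI : ∀ (d : A × X) (s : ({l : Fin L // l ∈ SX} → X) × ({l : Fin L // l ∈ SA} → T))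
        (xL : X),
      pJoint p SX SA last (d, s, xL) *
          (∑ d', ∑ xL', pJoint p SX SA last (d', s, xL')) =
        (∑ xL', pJoint p SX SA last (d, s, xL')) *
          (∑ d', pJoint p SX SA last (d', s, xL))) :
    mutualInfo (fun q : (A × X) × X =>
        ∑ za : Fin L → T, ∑ zx : Fin L → X,
          if zx last = q.2 then p (q.1, za, zx) else 0) ≤
      (∑ l ∈ SA, ∑ d : A × X, ∑ za : Fin L → T, ∑ zx : Fin L → X,
        p (d, za, zx) *
          Real.log (PA l (d.1, prevIdx d.2 zx l) (za l) / QA l (za l))) +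
      ∑ l ∈ SX, ∑ d : A × X, ∑ za : Fin L → T, ∑ zx : Fin L → X,
        p (d, za, zx) *
          Real.log (PX l (prevIdx d.2 zx l, za l) (zx l) / QX l (zx l)) :=
  gib_upper_bound_general L pD hpD hpDsum PA hPA hPAsum PX hPX hPXsum QA hQA hQAsum QX hQX hQXsum p
    hfact SX SA last hCI
end
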